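/- Let q ∈ ℝ^d be a query vector and v_1, …, v_n ∈ ℝ^d atom vectors with ∑_{j=1}^d √(q_j² ∑_{i=1}^n v_{ij}²) > 0, and let μ_i := (1/d) ∑_{j=1}^d v_{ij} q_j. The minimum of the combined variance ∑_{i=1}^n Var_{J∼P_w}[X_{iJ}] over probability vectors w with positive entries equals (1/d²) (∑_{j=1}^d √(q_j² ∑_{i=1}^n v_{ij}²))² − ∑_{i=1}^n μ_i². -/

import Mathlib

/-!
Expanding the variance, the combined variance equals `(1/d²) ∑_j a_j / w_j - ∑_i μ_i²` with
`a_j = q_j² ∑_i v_{ij}²`. By Cauchy–Schwarz, `∑_j a_j / w_j ≥ (∑_j √a_j)²` whenever `∑_j w_j = 1`,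
with equality at `w ∝ √a`. Those weights may vanish, so the infimum is approached, not
necessarily attained, by the positive weights `w ∝ √a + t` as `t → 0⁺`.
-/

open Finset

/-- The importance-weighted estimator `X_{iJ} = v_{iJ} q_J / (d w_J)` of the normalized inner
product, evaluated at coordinate `j`. -/
noncomputable def impEst (d n : ℕ) (v : Fin n → Fin d → ℝ) (q : Fin d → ℝ)
    (w : Fin d → ℝ) (i : Fin n) (j : Fin d) : ℝ :=
  v i j * q j / (d * w j)

/-- The mean `E_{J ∼ P_w}[X_{iJ}]` of the importance-weighted estimator for atom `i`, where
`J` is categorical with `P(J = j) = w_j`. -/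
noncomputable def impMean (d n : ℕ) (v : Fin n → Fin d → ℝ) (q : Fin d → ℝ)
    (w : Fin d → ℝ) (i : Fin n) : ℝ :=
  ∑ j, w j * impEst d n v q w i j

/-- The variance `Var_{J ∼ P_w}[X_{iJ}] = E[(X_{iJ} - E[X_{iJ}])²]` of the importance-weighted
estimator for atom `i`, where `J` is categorical with `P(J = j) = w_j`. -/
noncomputable def impVar (d n : ℕ) (v : Fin n → Fin d → ℝ) (q : Fin d → ℝ)
    (w : Fin d → ℝ) (i : Fin n) : ℝ :=
  ∑ j, w j * (impEst d n v q w i j - impMean d n v q w i) ^ 2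

/-- The combined variance `∑_{i ∈ [n]} Var_{J ∼ P_w}[X_{iJ}]` across all atoms. -/
noncomputable def combinedVar (d n : ℕ) (v : Fin n → Fin d → ℝ) (q : Fin d → ℝ)
    (w : Fin d → ℝ) : ℝ :=
  ∑ i, impVar d n v q w i

section WeightedSums

variable {ι : Type*} [Fintype ι]

theorem sum_mul_sub_sq_eq_sum_mul_sq_sub_sq (w x : ι → ℝ) (hw : ∑ j, w j = 1) :
    ∑ j, w j * (x j - ∑ k, w k * x k) ^ 2 = ∑ j, w j * x j ^ 2 - (∑ j, w j * x j) ^ 2 := by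
  set m := ∑ k, w k * x k
  calc ∑ j, w j * (x j - m) ^ 2 = ∑ j, (w j * x j ^ 2 - 2 * m * (w j * x j) + m ^ 2 * w j) :=
        sum_congr rfl fun j _ => by ring
    _ = ∑ j, w j * x j ^ 2 - 2 * m * m + m ^ 2 * ∑ j, w j := by
        rw [sum_add_distrib, sum_sub_distrib, ← mul_sum, ← mul_sum]
    _ = ∑ j, w j * x j ^ 2 - m ^ 2 := by rw [hw]; ring

theorem sq_sum_sqrt_le_sum_div {a w : ι → ℝ} (ha : ∀ j, 0 ≤ a j) (hw : ∀ j, 0 < w j)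
    (hw1 : ∑ j, w j = 1) : (∑ j, √(a j)) ^ 2 ≤ ∑ j, a j / w j := by
  simpa [hw1, Real.sq_sqrt (ha _)] using
    sq_sum_div_le_sum_sq_div univ (fun j => √(a j)) fun j _ => hw j

theorem sum_div_le_of_weights_sqrt_add {a : ι → ℝ} (ha : ∀ j, 0 ≤ a j) {t : ℝ} (ht : 0 < t) :
    let S := ∑ j, √(a j)
    let N : ℝ := Fintype.card ι
    ∑ j, a j / ((√(a j) + t) / (S + N * t)) ≤ S * (S + N * t) := by
  intro S N
  rw [sum_mul]
  refine sum_le_sum fun j _ => ?_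
  have hsq : a j ≤ √(a j) * (√(a j) + t) := by
    nlinarith [Real.mul_self_sqrt (ha j), Real.sqrt_nonneg (a j)]
  rw [div_div_eq_mul_div, div_le_iff₀ (by positivity)]
  have : 0 ≤ S + N * t := by positivity
  nlinarith

variable [Nonempty ι]

theorem exists_weights_sum_div_le {a : ι → ℝ} (ha : ∀ j, 0 ≤ a j) {ε : ℝ} (hε : 0 < ε) :
    ∃ w : ι → ℝ, (∀ j, 0 < w j) ∧ ∑ j, w j = 1 ∧ ∑ j, a j / w j ≤ (∑ j, √(a j)) ^ 2 + ε := by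
  set S := ∑ j, √(a j)
  set N : ℝ := (Fintype.card ι : ℝ)
  set t := ε / (N * S + 1)
  have ht : 0 < t := by positivity
  have hden : 0 < S + N * t := by positivity
  refine ⟨fun j => (√(a j) + t) / (S + N * t), fun j => by positivity, ?_, ?_⟩
  · rw [← sum_div, sum_add_distrib, sum_const, card_univ, nsmul_eq_mul, div_self hden.ne']
  · have hexcess : N * t * S ≤ ε := by
      rw [show N * t * S = ε * (N * S / (N * S + 1)) by simp only [t]; ring]
      exact mul_le_of_le_one_right hε.le
        ((div_le_one (by positivity)).2 (by linarith))
    calc ∑ j, a j / ((√(a j) + t) / (S + N * t)) ≤ S * (S + N * t) :=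
          sum_div_le_of_weights_sqrt_add ha ht
      _ = S ^ 2 + N * t * S := by ring
      _ ≤ S ^ 2 + ε := by linarith

theorem isGLB_sum_div_weights {a : ι → ℝ} (ha : ∀ j, 0 ≤ a j) :
    IsGLB {x : ℝ | ∃ w : ι → ℝ, (∀ j, 0 < w j) ∧ ∑ j, w j = 1 ∧ x = ∑ j, a j / w j}
      ((∑ j, √(a j)) ^ 2) := by
  refine ⟨?_, fun b hb => le_of_forall_pos_le_add fun ε hε => ?_⟩
  · rintro x ⟨w, hw, hw1, rfl⟩
    exact sq_sum_sqrt_le_sum_div ha hw hw1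
  · obtain ⟨w, hw, hw1, hle⟩ := exists_weights_sum_div_le ha hε
    exact (hb ⟨w, hw, hw1, rfl⟩).trans hle

end WeightedSums

section ImportanceSampling

variable {d n : ℕ} (v : Fin n → Fin d → ℝ) (q : Fin d → ℝ) {w : Fin d → ℝ}

theorem impMean_eq (hw : ∀ j, 0 < w j) (i : Fin n) :
    impMean d n v q w i = (1 / d : ℝ) * ∑ j, v i j * q j := by
  rw [impMean, mul_sum]
  refine sum_congr rfl fun j _ => ?_
  rw [impEst]
  field_simp [(hw j).ne']

theorem impVar_eq (hw : ∀ j, 0 < w j) (hw1 : ∑ j, w j = 1) (i : Fin n) :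
    impVar d n v q w i =
      ∑ j, (v i j * q j) ^ 2 / ((d : ℝ) ^ 2 * w j) - ((1 / d : ℝ) * ∑ j, v i j * q j) ^ 2 := by
  rw [impVar, impMean, sum_mul_sub_sq_eq_sum_mul_sq_sub_sq w _ hw1, ← impMean,
    impMean_eq v q hw]
  congr 1
  refine sum_congr rfl fun j _ => ?_
  rw [impEst]
  field_simp [(hw j).ne']

theorem combinedVar_eq (hw : ∀ j, 0 < w j) (hw1 : ∑ j, w j = 1) :
    combinedVar d n v q w =
      1 / (d : ℝ) ^ 2 * ∑ j, (q j ^ 2 * ∑ i, v i j ^ 2) / w j -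
        ∑ i, ((1 / d : ℝ) * ∑ j, v i j * q j) ^ 2 := by
  rw [combinedVar]
  simp only [impVar_eq v q hw hw1, sum_sub_distrib]
  rw [sum_comm, mul_sum]
  congr 1
  refine sum_congr rfl fun j _ => ?_
  have hsq : ∑ i, (v i j * q j) ^ 2 = q j ^ 2 * ∑ i, v i j ^ 2 := by
    rw [mul_sum]; exact sum_congr rfl fun i _ => by ring
  rw [← sum_div, hsq]
  field_simp [(hw j).ne']

end ImportanceSampling

theorem combined_variance_min_value_general (d n : ℕ) (hd : 0 < d) (q : Fin d → ℝ)
    (v : Fin n → Fin d → ℝ) :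
    IsGLB {x : ℝ | ∃ w : Fin d → ℝ, (∀ j, 0 < w j) ∧ (∑ j, w j = 1) ∧
        x = combinedVar d n v q w}
      ((1 / (d : ℝ) ^ 2) * (∑ j, Real.sqrt (q j ^ 2 * ∑ i, v i j ^ 2)) ^ 2 -
        ∑ i, ((1 / d : ℝ) * ∑ j, v i j * q j) ^ 2) := by
  have : Nonempty (Fin d) := ⟨⟨0, hd⟩⟩
  set C := ∑ i, ((1 / d : ℝ) * ∑ j, v i j * q j) ^ 2
  have hset : {x : ℝ | ∃ w : Fin d → ℝ, (∀ j, 0 < w j) ∧ (∑ j, w j = 1) ∧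
      x = combinedVar d n v q w} = (fun x => x - C) '' ((fun x => 1 / (d : ℝ) ^ 2 * x) ''
        {x | ∃ w : Fin d → ℝ, (∀ j, 0 < w j) ∧ ∑ j, w j = 1 ∧
          x = ∑ j, (q j ^ 2 * ∑ i, v i j ^ 2) / w j}) := by
    ext x
    simp only [Set.mem_image, Set.mem_ofPred_eq]
    constructor
    · rintro ⟨w, hw, hw1, rfl⟩
      exact ⟨_, ⟨_, ⟨w, hw, hw1, rfl⟩, rfl⟩, (combinedVar_eq v q hw hw1).symm⟩
    · rintro ⟨_, ⟨_, ⟨w, hw, hw1, rfl⟩, rfl⟩, rfl⟩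
      exact ⟨w, hw, hw1, (combinedVar_eq v q hw hw1).symm⟩
  rw [hset]
  exact (OrderIso.subRight C).isGLB_image'.2 <|
    (isGLB_sum_div_weights fun j => by positivity).mul_left (by positivity)

/-- **Minimum value of the combined variance.**
Let `q ∈ ℝ^d` be a query and `v_1, …, v_n ∈ ℝ^d` atoms with
`∑_j √(q_j² ∑_i v_{ij}²) > 0`, and let `μ_i = (1/d) ∑_j v_{ij} q_j`. The infimum of the
combined variance `∑_i Var_{J ∼ P_w}[X_{iJ}]` over probability vectors `w` with positive
entries equals `(1/d²) (∑_j √(q_j² ∑_i v_{ij}²))² − ∑_i μ_i²`. -/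
theorem combined_variance_min_value (d n : ℕ) (hd : 0 < d) (q : Fin d → ℝ)
    (v : Fin n → Fin d → ℝ)
    (hpos : 0 < ∑ j, Real.sqrt (q j ^ 2 * ∑ i, v i j ^ 2)) :
    IsGLB {x : ℝ | ∃ w : Fin d → ℝ, (∀ j, 0 < w j) ∧ (∑ j, w j = 1) ∧
        x = combinedVar d n v q w}
      ((1 / (d : ℝ) ^ 2) * (∑ j, Real.sqrt (q j ^ 2 * ∑ i, v i j ^ 2)) ^ 2 -
        ∑ i, ((1 / d : ℝ) * ∑ j, v i j * q j) ^ 2) :=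
  combined_variance_min_value_general d n hd q v
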